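/- For I ≥ 2 identical teams each with resource R̄/I, risk-sensitivity α ∈ (0,1), contest exponent μ > 0, and parameters β ∈ (0,1], γ ∈ (0,1], σ ∈ [0,1), define K = α + (1−α)(I−1) and the candidate symmetric equilibrium arming g = μ(I−1)α(1−α)γ(1−σ)βR̄ / ( γ(1−σ)β[μI(I−1)α(1−α) + αK] + σβK² ). Then g > 0 and g < R̄/I. -/

import Mathlib

/-!
Write `c = γ(1-σ)β > 0`. Multiplying numerator and denominator by `I` shows
`g = (R̄/I) · x / (x + y)` with `x = c μ I (I-1) α (1-α) > 0` and `y = c α K + σ β K² > 0`,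
so `g` is the fraction `x / (x + y) ∈ (0, 1)` of the per-team resource `R̄/I`.
-/

theorem div_add_mem_Ioo {𝕜 : Type*} [Field 𝕜] [LinearOrder 𝕜] [IsStrictOrderedRing 𝕜]
    {x y : 𝕜} (hx : 0 < x) (hy : 0 < y) : x / (x + y) ∈ Set.Ioo 0 1 :=
  ⟨div_pos hx (add_pos hx hy), (div_lt_one (add_pos hx hy)).2 (lt_add_of_pos_right x hy)⟩

theorem symmetric_expectile_equilibrium_interior_general (I : ℕ) (hI : 2 ≤ I)
    (Rbar μ α β γ σ : ℝ) (hRbar : 0 < Rbar) (hμ : 0 < μ)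
    (hα : α ∈ Set.Ioo (0:ℝ) 1)
    (hβ : β ∈ Set.Ioc (0:ℝ) 1)
    (hσ : σ ∈ Set.Ico (0:ℝ) 1)
    (hpos : 0 < β * γ * (1 - σ))
    (K g : ℝ)
    (hK : K = α + (1 - α) * ((I : ℝ) - 1))
    (hg : g = μ * ((I : ℝ) - 1) * α * (1 - α) * γ * (1 - σ) * β * Rbar /
        (γ * (1 - σ) * β * (μ * (I : ℝ) * ((I : ℝ) - 1) * α * (1 - α) + α * K) +
          σ * β * K ^ 2)) :
    0 < g ∧ g < Rbar / (I : ℝ) := by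
  obtain ⟨hα0, hα1⟩ := hα
  have hI1 : (0 : ℝ) < I - 1 := by
    have : (2 : ℝ) ≤ I := by exact_mod_cast hI
    linarith
  have hI0 : (0 : ℝ) < I := by linarith
  have hα1' : 0 < 1 - α := sub_pos.2 hα1
  have hK0 : 0 < K := by rw [hK]; positivity
  have hc : 0 < γ * (1 - σ) * β := by convert hpos using 1; ring
  set c := γ * (1 - σ) * β
  have hx : 0 < c * (μ * I * (I - 1) * α * (1 - α)) := by positivity
  have hy : 0 < c * (α * K) + σ * β * K ^ 2 :=
    add_pos_of_pos_of_nonneg (by positivity) (by have := hσ.1; have := hβ.1; positivity)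
  have hshare : g = Rbar / I * (c * (μ * I * (I - 1) * α * (1 - α)) /
      (c * (μ * I * (I - 1) * α * (1 - α)) + (c * (α * K) + σ * β * K ^ 2))) := by
    rw [hg]
    field_simp
    ring
  obtain ⟨h0, h1⟩ := div_add_mem_Ioo hx hy
  rw [hshare]
  exact ⟨by positivity, mul_lt_of_lt_one_right (by positivity) h1⟩

/-- Interiority of the symmetric expectile-equilibrium arming level: with
`K = α + (1-α)(I-1)` and
`g = μ(I-1)α(1-α)γ(1-σ)βR̄ / (γ(1-σ)β[μI(I-1)α(1-α) + αK] + σβK²)`,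
one has `0 < g < R̄/I`. -/
theorem symmetric_expectile_equilibrium_interior (I : ℕ) (hI : 2 ≤ I)
    (Rbar μ α β γ σ : ℝ) (hRbar : 0 < Rbar) (hμ : 0 < μ)
    (hα : α ∈ Set.Ioo (0:ℝ) 1)
    (hβ : β ∈ Set.Ioc (0:ℝ) 1) (hγ : γ ∈ Set.Ioc (0:ℝ) 1)
    (hσ : σ ∈ Set.Ico (0:ℝ) 1)
    (hpos : 0 < β * γ * (1 - σ))
    (K g : ℝ)
    (hK : K = α + (1 - α) * ((I : ℝ) - 1))
    (hg : g = μ * ((I : ℝ) - 1) * α * (1 - α) * γ * (1 - σ) * β * Rbar /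
        (γ * (1 - σ) * β * (μ * (I : ℝ) * ((I : ℝ) - 1) * α * (1 - α) + α * K) +
          σ * β * K ^ 2)) :
    0 < g ∧ g < Rbar / (I : ℝ) :=
  symmetric_expectile_equilibrium_interior_general I hI Rbar μ α β γ σ hRbar hμ hα hβ hσ hpos K g hK
    hg
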